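/- arXiv:2203.09013 — 5 statements merged into one kernel-verified Lean document; each statement's English description precedes it below -/
import Mathlib

section
/- Directional monotonicity of folding orbits: suppose half-spaces H_1,…,H_ℓ (each of the form {v : ⟨v, n_k⟩ ≥ 0} with unit vector n_k) and a unit vector e satisfy ⟨n_k, e⟩ ≤ −ρ for all k, where ρ > 0. If v_{j+1} = F_{H_{α_j}}(v_j) for indices α_j ∈ {1,…,ℓ}, then for all m > k one has ⟨v_m, e⟩ − ⟨v_k, e⟩ ≤ −ρ |v_m − v_k|. -/
/-!
Each fold moves a point along the unit normal of its half-space, `F_H v - v = ‖F_H v - v‖ • n`,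
so a single step lowers `⟪·, e⟫` by at least `ρ` times the step length. Summing over the steps and
using the triangle inequality for the path `v_k, …, v_m` gives the bound for the total displacement.
-/

noncomputable def fold {E : Type*} [NormedAddCommGroup E] [InnerProductSpace ℝ E]
    (n p v : E) : E :=
  if 0 ≤ (inner ℝ (v - p) n : ℝ) then v else v - (2 * (inner ℝ (v - p) n : ℝ)) • n

section Fold

variable {E : Type*} [NormedAddCommGroup E] [InnerProductSpace ℝ E]

theorem fold_sub_self_eq_norm_smul {n : E} (hn : ‖n‖ = 1) (p v : E) :
    fold n p v - v = ‖fold n p v - v‖ • n := by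
  unfold fold
  split_ifs with h
  · simp
  · have hneg : 2 * inner ℝ (v - p) n < 0 := by linarith [not_le.mp h]
    rw [sub_sub_cancel_left, norm_neg, norm_smul, hn, mul_one, Real.norm_eq_abs,
      abs_of_neg hneg, neg_smul]

theorem inner_fold_sub_inner_le {n e : E} {ρ : ℝ} (hn : ‖n‖ = 1) (hne : inner ℝ n e ≤ -ρ)
    (p v : E) :
    inner ℝ (fold n p v) e - inner ℝ v e ≤ -ρ * ‖fold n p v - v‖ := by
  calc inner ℝ (fold n p v) e - inner ℝ v e
      = ‖fold n p v - v‖ * inner ℝ n e := by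
        rw [← inner_sub_left, ← real_inner_smul_left, ← fold_sub_self_eq_norm_smul hn]
    _ ≤ ‖fold n p v - v‖ * -ρ := mul_le_mul_of_nonneg_left hne (norm_nonneg _)
    _ = -ρ * ‖fold n p v - v‖ := mul_comm _ _

end Fold

theorem sub_le_neg_mul_dist_of_forall_succ {X : Type*} [PseudoMetricSpace X] {g : ℕ → ℝ}
    {x : ℕ → X} {ρ : ℝ} (hρ : 0 ≤ ρ)
    (hstep : ∀ j, g (j + 1) - g j ≤ -ρ * dist (x (j + 1)) (x j)) {k m : ℕ} (hkm : k ≤ m) :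
    g m - g k ≤ -ρ * dist (x m) (x k) := by
  induction m, hkm using Nat.le_induction with
  | base => simp
  | succ m _ ih =>
    have htri := mul_le_mul_of_nonneg_left (dist_triangle (x (m + 1)) (x m) (x k)) hρ
    linarith [hstep m]

theorem folding_directional_monotonicity_general {d ℓ : ℕ}
    (nvec : Fin ℓ → EuclideanSpace ℝ (Fin d)) (e : EuclideanSpace ℝ (Fin d))
    (ρ : ℝ) (hρ : 0 < ρ) (hn : ∀ k, ‖nvec k‖ = 1)
    (hne : ∀ k, (inner ℝ (nvec k) e : ℝ) ≤ -ρ)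
    (α : ℕ → Fin ℓ) (v : ℕ → EuclideanSpace ℝ (Fin d))
    (hv : ∀ j, v (j + 1) = fold (nvec (α j)) 0 (v j))
    (k m : ℕ) (hkm : k < m) :
    (inner ℝ (v m) e : ℝ) - (inner ℝ (v k) e : ℝ) ≤ -ρ * ‖v m - v k‖ := by
  rw [← dist_eq_norm]
  refine sub_le_neg_mul_dist_of_forall_succ (g := fun j => inner ℝ (v j) e) hρ.le
    (fun j => ?_) hkm.le
  rw [dist_eq_norm, hv j]
  exact inner_fold_sub_inner_le (hn (α j)) (hne (α j)) 0 (v j)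

theorem folding_directional_monotonicity {d ℓ : ℕ}
    (nvec : Fin ℓ → EuclideanSpace ℝ (Fin d)) (e : EuclideanSpace ℝ (Fin d))
    (ρ : ℝ) (hρ : 0 < ρ) (hn : ∀ k, ‖nvec k‖ = 1) (he : ‖e‖ = 1)
    (hne : ∀ k, (inner ℝ (nvec k) e : ℝ) ≤ -ρ)
    (α : ℕ → Fin ℓ) (v : ℕ → EuclideanSpace ℝ (Fin d))
    (hv : ∀ j, v (j + 1) = fold (nvec (α j)) 0 (v j))
    (k m : ℕ) (hkm : k < m) :
    (inner ℝ (v m) e : ℝ) - (inner ℝ (v k) e : ℝ) ≤ -ρ * ‖v m - v k‖ :=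
  folding_directional_monotonicity_general nvec e ρ hρ hn hne α v hv k m hkm
end

section
/- A single folding applied to a point whose orbit has drifted satisfies: with e a fixed unit vector, if for each k the half-space H_k = {v : ⟨v, n_k⟩ ≥ 0}, ⟨n_k, e⟩ ≤ −ρ < 0, and v_{j+1} = F_{H_{α_j}}(v_j), then for any point w with ⟨e, v_m⟩ ≤ ⟨e, w⟩ and ρ ≤ 1, one has |v_j − w| ≥ ρ |v_m − w| / 2 for all j ≥ m. -/
/-!
Every folding step moves the point by a nonnegative multiple of a unit normal `n` with
`⟪n, e⟫ ≤ -ρ`, so each step, and hence (by subadditivity of the norm) every stretch of the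
orbit, decreases the height `⟪e, ·⟫` by at least `ρ` times its length. Once the orbit has moved
farther than `|v_m - w| / 2` from `v_m`, it lies at least `ρ |v_m - w| / 2` below `w` in the
direction `e`; before that, the triangle inequality suffices.
-/

open scoped RealInnerProductSpace

theorem exists_nonneg_smul_eq_fold_sub_self {E : Type*} [NormedAddCommGroup E]
    [InnerProductSpace ℝ E] (n p x : E) : ∃ c : ℝ, 0 ≤ c ∧ fold n p x - x = c • n := by
  unfold fold
  split_ifs with h
  · exact ⟨0, le_rfl, by simp⟩
  · refine ⟨-(2 * ⟪x - p, n⟫), by linarith [not_le.mp h], ?_⟩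
    rw [neg_smul, sub_sub_cancel_left]

section DriftCone

variable {E : Type*} [NormedAddCommGroup E] [InnerProductSpace ℝ E]

def driftCone (e : E) (ρ : ℝ) : Set E := {y | ⟪e, y⟫ ≤ -ρ * ‖y‖}

variable {e : E} {ρ : ℝ}

theorem mem_driftCone {y : E} : y ∈ driftCone e ρ ↔ ⟪e, y⟫ ≤ -ρ * ‖y‖ := Iff.rfl

theorem zero_mem_driftCone : (0 : E) ∈ driftCone e ρ := by
  simp [mem_driftCone]

theorem smul_mem_driftCone {c : ℝ} (hc : 0 ≤ c) {y : E} (hy : y ∈ driftCone e ρ) :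
    c • y ∈ driftCone e ρ := by
  rw [mem_driftCone, inner_smul_right, norm_smul, Real.norm_of_nonneg hc]
  nlinarith [mem_driftCone.mp hy]

theorem add_mem_driftCone (hρ : 0 ≤ ρ) {y z : E} (hy : y ∈ driftCone e ρ)
    (hz : z ∈ driftCone e ρ) : y + z ∈ driftCone e ρ := by
  rw [mem_driftCone, inner_add_right]
  nlinarith [mem_driftCone.mp hy, mem_driftCone.mp hz, norm_add_le y z]

theorem mem_driftCone_of_norm_eq_one {n : E} (hn : ‖n‖ = 1) (hne : ⟪n, e⟫ ≤ -ρ) :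
    n ∈ driftCone e ρ := by
  rwa [mem_driftCone, hn, mul_one, real_inner_comm]

theorem sub_mem_driftCone_of_le (hρ : 0 ≤ ρ) {v : ℕ → E}
    (hstep : ∀ j, v (j + 1) - v j ∈ driftCone e ρ) {m j : ℕ} (hmj : m ≤ j) :
    v j - v m ∈ driftCone e ρ := by
  induction j, hmj using Nat.le_induction with
  | base => simpa using zero_mem_driftCone
  | succ k _ ih =>
    rw [← sub_add_sub_cancel (v (k + 1)) (v k) (v m)]
    exact add_mem_driftCone hρ (hstep k) ih

theorem mul_norm_sub_div_two_le_norm_sub (he : ‖e‖ ≤ 1) (hρ : 0 ≤ ρ) (hρ1 : ρ ≤ 1)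
    {x y w : E} (hxy : x - y ∈ driftCone e ρ) (hyw : ⟪e, y⟫ ≤ ⟪e, w⟫) :
    ρ * ‖y - w‖ / 2 ≤ ‖x - w‖ := by
  rcases le_or_gt ‖x - y‖ (‖y - w‖ / 2) with hnear | hfar
  · have htri : ‖y - w‖ ≤ ‖x - y‖ + ‖x - w‖ := by
      simpa only [norm_sub_rev y x] using norm_sub_le_norm_sub_add_norm_sub y x w
    nlinarith [norm_nonneg (y - w)]
  · have hheight : ⟪e, x - w⟫ ≤ -ρ * (‖y - w‖ / 2) := by
      have hsplit : ⟪e, x - w⟫ = ⟪e, x - y⟫ + (⟪e, y⟫ - ⟪e, w⟫) := by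
        rw [← sub_add_sub_cancel x y w, inner_add_right, inner_sub_right e y w]
      nlinarith [mem_driftCone.mp hxy]
    have hcs : -⟪e, x - w⟫ ≤ ‖x - w‖ := by
      nlinarith [neg_le_abs ⟪e, x - w⟫, abs_real_inner_le_norm e (x - w), norm_nonneg (x - w)]
    linarith

end DriftCone

theorem folding_orbit_distance_lower_bound {d ℓ : ℕ}
    (nvec : Fin ℓ → EuclideanSpace ℝ (Fin d)) (e w : EuclideanSpace ℝ (Fin d))
    (ρ : ℝ) (hρ : 0 < ρ) (hρ1 : ρ ≤ 1) (hn : ∀ k, ‖nvec k‖ = 1) (he : ‖e‖ = 1)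
    (hne : ∀ k, (inner ℝ (nvec k) e : ℝ) ≤ -ρ)
    (α : ℕ → Fin ℓ) (v : ℕ → EuclideanSpace ℝ (Fin d))
    (hv : ∀ j, v (j + 1) = fold (nvec (α j)) 0 (v j))
    (m : ℕ) (hm : (inner ℝ e (v m) : ℝ) ≤ (inner ℝ e w : ℝ)) :
    ∀ j, m ≤ j → ρ * ‖v m - w‖ / 2 ≤ ‖v j - w‖ := by
  intro j hmj
  have hstep : ∀ i, v (i + 1) - v i ∈ driftCone e ρ := by
    intro i
    obtain ⟨c, hc, hfold⟩ := exists_nonneg_smul_eq_fold_sub_self (nvec (α i)) 0 (v i)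
    rw [hv i, hfold]
    exact smul_mem_driftCone hc (mem_driftCone_of_norm_eq_one (hn _) (hne _))
  exact mul_norm_sub_div_two_le_norm_sub he.le hρ.le hρ1
    (sub_mem_driftCone_of_le hρ.le hstep hmj) hm
end

section
/- Wedge angle lower bound: if B(w_0, r) ⊂ H_1 ∩ H_2 where H_1, H_2 are closed half-planes in ℝ² whose boundaries meet at a point z, and the wedge H_1 ∩ H_2 has angle α, then α ≥ arcsin((r/2)/|z − w_0|) ≥ (r/2)/|z − w_0|. -/
open Real InnerProductGeometry RealInnerProductSpace

/-
The centre `w₀` lies at distance at least `r` inside each half-plane, so with `v = w₀ - z` the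
angle between `v` and each inward normal is at most `arccos (r / ‖v‖)`. By the triangle inequality
for angles the normals make an angle at most `2 arccos (r / ‖v‖)`, hence the wedge angle is at
least `2 arcsin (r / ‖v‖)`, which dominates `arcsin (r / (2 ‖v‖))`.
-/

theorem Real.self_le_arcsin {x : ℝ} (h₀ : 0 ≤ x) (h₁ : x ≤ 1) : x ≤ arcsin x :=
  calc x = sin (arcsin x) := (sin_arcsin (by linarith) h₁).symm
    _ ≤ arcsin x := sin_le (arcsin_nonneg.2 h₀)

section InnerProductSpace

variable {V : Type*} [NormedAddCommGroup V] [InnerProductSpace ℝ V]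

theorem le_inner_sub_of_closedBall_subset {w z n : V} {r : ℝ} (hr : 0 ≤ r) (hn : ‖n‖ = 1)
    (h : Metric.closedBall w r ⊆ {x | 0 ≤ ⟪x - z, n⟫}) : r ≤ ⟪w - z, n⟫ := by
  have hmem : w - r • n ∈ Metric.closedBall w r := by
    simp [norm_smul, hn, abs_of_nonneg hr]
  have hinner : ⟪w - r • n - z, n⟫ = ⟪w - z, n⟫ - r := by
    rw [sub_right_comm, inner_sub_left, real_inner_smul_left, real_inner_self_eq_norm_sq, hn]
    ring
  have hsub : 0 ≤ ⟪w - r • n - z, n⟫ := h hmem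
  linarith

theorem InnerProductGeometry.angle_le_arccos_div_norm_of_le_inner {v n : V} {r : ℝ}
    (hn : ‖n‖ = 1) (h : r ≤ ⟪v, n⟫) : angle v n ≤ arccos (r / ‖v‖) := by
  rw [angle, hn, mul_one]
  exact arccos_le_arccos (div_le_div_of_nonneg_right h (norm_nonneg v))

theorem InnerProductGeometry.two_mul_arcsin_le_pi_sub_angle {v n₁ n₂ : V} {r : ℝ}
    (hn₁ : ‖n₁‖ = 1) (hn₂ : ‖n₂‖ = 1) (h₁ : r ≤ ⟪v, n₁⟫) (h₂ : r ≤ ⟪v, n₂⟫) :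
    2 * arcsin (r / ‖v‖) ≤ π - angle n₁ n₂ := by
  have htri : angle n₁ n₂ ≤ angle v n₁ + angle v n₂ :=
    angle_comm v n₁ ▸ angle_le_angle_add_angle n₁ v n₂
  linarith [angle_le_arccos_div_norm_of_le_inner hn₁ h₁,
    angle_le_arccos_div_norm_of_le_inner hn₂ h₂, arccos_eq_pi_div_two_sub_arcsin (r / ‖v‖)]

end InnerProductSpace

theorem wedge_angle_lower_bound_general
    (n1 n2 z w0 : EuclideanSpace ℝ (Fin 2)) (r α : ℝ)
    (hn1 : ‖n1‖ = 1) (hn2 : ‖n2‖ = 1) (hr : 0 < r)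
    (hball : ∀ x, dist x w0 ≤ r →
      0 ≤ (inner ℝ (x - z) n1 : ℝ) ∧ 0 ≤ (inner ℝ (x - z) n2 : ℝ))
    (hα : α = Real.pi - Real.arccos (inner ℝ n1 n2 : ℝ)) :
    Real.arcsin (r / 2 / dist z w0) ≤ α ∧
    r / 2 / dist z w0 ≤ Real.arcsin (r / 2 / dist z w0) := by
  have h₁ := le_inner_sub_of_closedBall_subset hr.le hn1 fun x hx => (hball x hx).1
  have h₂ := le_inner_sub_of_closedBall_subset hr.le hn2 fun x hx => (hball x hx).2
  have hrD : r ≤ ‖w0 - z‖ := h₁.trans (by simpa [hn1] using real_inner_le_norm (w0 - z) n1)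
  rw [dist_comm, dist_eq_norm, div_right_comm]
  set c := r / ‖w0 - z‖
  have hc₀ : 0 ≤ c := by positivity
  have hc₁ : c ≤ 1 := div_le_one_of_le₀ hrD (norm_nonneg _)
  have hα' : α = π - angle n1 n2 := by simp [hα, angle, hn1, hn2]
  refine ⟨?_, self_le_arcsin (by positivity) (by linarith)⟩
  calc arcsin (c / 2) ≤ arcsin c := arcsin_le_arcsin (by linarith)
    _ ≤ 2 * arcsin c := by linarith [arcsin_nonneg.2 hc₀]
    _ ≤ α := hα' ▸ two_mul_arcsin_le_pi_sub_angle hn1 hn2 h₁ h₂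

theorem wedge_angle_lower_bound
    (n1 n2 z w0 : EuclideanSpace ℝ (Fin 2)) (r α : ℝ)
    (hn1 : ‖n1‖ = 1) (hn2 : ‖n2‖ = 1) (hr : 0 < r)
    (hind : LinearIndependent ℝ ![n1, n2])
    (hball : ∀ x, dist x w0 ≤ r →
      0 ≤ (inner ℝ (x - z) n1 : ℝ) ∧ 0 ≤ (inner ℝ (x - z) n2 : ℝ))
    (hα : α = Real.pi - Real.arccos (inner ℝ n1 n2 : ℝ)) :
    Real.arcsin (r / 2 / dist z w0) ≤ α ∧
    r / 2 / dist z w0 ≤ Real.arcsin (r / 2 / dist z w0) :=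
  wedge_angle_lower_bound_general n1 n2 z w0 r α hn1 hn2 hr hball hα
end

section
/- The collision map of two touching pinned balls is a folding: for touching balls i, j (|x_i − x_j| = 2), the transformation T_{ij} on ℝ^{nd} (which replaces (v_i, v_j) by (w_i, w_j) with w_i = v_i + (v_j·u)u − (v_i·u)u and w_j = v_j + (v_i·u)u − (v_j·u)u, u = (x_i − x_j)/|x_i − x_j|, when (v_i − v_j)·(x_i − x_j) < 0, and is the identity otherwise) coincides with the folding F_{H_{ij}} relative to the half-space H_{ij} = {w ∈ ℝ^{nd} : ⟨w, z_{ij}⟩ ≥ 0}, where z_{ij} is the unit vector proportional to the vector whose i-th block is x_i − x_j, j-th block is x_j − x_i, and all other blocks are 0. -/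
open scoped Classical

/-- The vector in `ℝ^{nd}` whose `i`-th block is `x i - x j`, `j`-th block is
`x j - x i`, and all other blocks are zero. -/
noncomputable def ztilde {d n : ℕ} (x : Fin n → EuclideanSpace ℝ (Fin d)) (i j : Fin n) :
    PiLp 2 fun _ : Fin n => EuclideanSpace ℝ (Fin d) :=
  WithLp.toLp 2 fun k => if k = i then x i - x j else if k = j then x j - x i else 0

/-- The elastic collision map `T_{ij}` on pseudo-velocities of pinned balls. -/
noncomputable def collide {d n : ℕ} (x : Fin n → EuclideanSpace ℝ (Fin d)) (i j : Fin n)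
    (v : PiLp 2 fun _ : Fin n => EuclideanSpace ℝ (Fin d)) :
    PiLp 2 fun _ : Fin n => EuclideanSpace ℝ (Fin d) :=
  let u : EuclideanSpace ℝ (Fin d) := ‖x i - x j‖⁻¹ • (x i - x j)
  if ‖x i - x j‖ = 2 ∧ (inner ℝ (v i - v j) (x i - x j) : ℝ) < 0 then
    WithLp.toLp 2 fun k =>
      if k = i then v i + (inner ℝ (v j) u : ℝ) • u - (inner ℝ (v i) u : ℝ) • u
      else if k = j then v j + (inner ℝ (v i) u : ℝ) • u - (inner ℝ (v j) u : ℝ) • u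
      else v k
  else v

/-- The touching graph of a family of pinned unit balls. -/
def touchGraph {d n : ℕ} (x : Fin n → EuclideanSpace ℝ (Fin d)) : SimpleGraph (Fin n) where
  Adj i j := i ≠ j ∧ ‖x i - x j‖ = 2
  symm := ⟨fun i j h => ⟨h.1.symm, by rw [norm_sub_rev]; exact h.2⟩⟩
  loopless := ⟨fun i h => h.1 rfl⟩

/-- The kissing number in dimension `d`: the maximal number of unit balls with
pairwise disjoint interiors all touching a fixed unit ball. -/
noncomputable def kissingNumber (d : ℕ) : ℕ :=
  sSup { m : ℕ | ∃ y : Fin m → EuclideanSpace ℝ (Fin d),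
    (∀ i, ‖y i‖ = 2) ∧ ∀ i j, i ≠ j → 2 ≤ ‖y i - y j‖ }

/-!
Write `a = ⟪v i - v j, x i - x j⟫ = ⟪v, z̃⟫`. Since `‖x i - x j‖ = 2`, exchanging the normal
components of `v i` and `v j` along `u = (x i - x j) / 2` subtracts `(a / 4) • z̃` from `v`,
and reflecting `v` in the hyperplane orthogonal to `z = 2^(-3/2) • z̃` subtracts
`2 ⟪v, z⟫ z = 2 · 2⁻³ · a • z̃`, the same vector; both maps move `v` exactly when `a < 0`.
-/

open RealInnerProductSpace

lemma fold_smul_zero {E : Type*} [NormedAddCommGroup E] [InnerProductSpace ℝ E]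
    {c : ℝ} (hc : 0 < c) (z v : E) :
    fold (c • z) 0 v = if 0 ≤ ⟪v, z⟫ then v else v - (2 * c ^ 2 * ⟪v, z⟫) • z := by
  simp only [fold, sub_zero, real_inner_smul_right, mul_nonneg_iff_of_pos_left hc, smul_smul]
  congr 3
  ring

lemma two_mul_sq_two_rpow_neg_three_halves : 2 * ((2 : ℝ) ^ (-(3 : ℝ) / 2)) ^ 2 = 1 / 4 := by
  rw [← Real.rpow_natCast, ← Real.rpow_mul zero_le_two]
  norm_num

lemma inner_ztilde {d n : ℕ} (x : Fin n → EuclideanSpace ℝ (Fin d)) {i j : Fin n} (hij : i ≠ j)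
    (v : PiLp 2 fun _ : Fin n => EuclideanSpace ℝ (Fin d)) :
    ⟪v, ztilde x i j⟫ = ⟪v i - v j, x i - x j⟫ := by
  rw [PiLp.inner_apply, Fintype.sum_eq_add i j hij]
  · simp only [ztilde, if_pos, if_neg hij.symm, inner_sub_left, ← neg_sub (x i) (x j),
      inner_neg_right]
    ring
  · intro k hk
    simp [ztilde, hk.1, hk.2]

lemma add_inner_half_smul_sub_inner_half_smul {E : Type*} [NormedAddCommGroup E] [InnerProductSpace ℝ E]
    (w w' y : E) :
    w + ⟪w', (2⁻¹ : ℝ) • y⟫ • (2⁻¹ : ℝ) • y - ⟪w, (2⁻¹ : ℝ) • y⟫ • (2⁻¹ : ℝ) • y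
      = w - (⟪w - w', y⟫ / 4) • y := by
  simp only [real_inner_smul_right, inner_sub_left, smul_smul]
  match_scalars <;> ring

lemma collide_of_norm_eq_two {d n : ℕ} {x : Fin n → EuclideanSpace ℝ (Fin d)} {i j : Fin n}
    (hij : ‖x i - x j‖ = 2) (v : PiLp 2 fun _ : Fin n => EuclideanSpace ℝ (Fin d)) :
    collide x i j v = if 0 ≤ ⟪v i - v j, x i - x j⟫ then v
      else v - (⟪v i - v j, x i - x j⟫ / 4) • ztilde x i j := by
  simp only [collide, hij, true_and, ← not_le, ite_not]
  split_ifs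
  · rfl
  ext1 k
  by_cases hki : k = i
  · subst hki
    simp only [ztilde, PiLp.sub_apply, PiLp.smul_apply, if_pos, add_inner_half_smul_sub_inner_half_smul]
  by_cases hkj : k = j
  · subst hkj
    simp only [ztilde, PiLp.sub_apply, PiLp.smul_apply, if_pos, if_neg hki,
      add_inner_half_smul_sub_inner_half_smul, ← neg_sub (v i), ← neg_sub (x i), inner_neg_left, neg_div,
      neg_smul, smul_neg]
  · simp [ztilde, hki, hkj]

theorem collision_is_folding_general {d n : ℕ} (x : Fin n → EuclideanSpace ℝ (Fin d))
    (i j : Fin n) (hij : ‖x i - x j‖ = 2)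
    (v : PiLp 2 fun _ : Fin n => EuclideanSpace ℝ (Fin d)) :
    collide x i j v = fold (((2 : ℝ) ^ (-(3 : ℝ) / 2)) • ztilde x i j) 0 v := by
  have hne : i ≠ j := by
    rintro rfl
    simp at hij
  rw [collide_of_norm_eq_two hij, fold_smul_zero (by positivity),
    two_mul_sq_two_rpow_neg_three_halves, inner_ztilde x hne, one_div_mul_eq_div]

theorem collision_is_folding {d n : ℕ} (x : Fin n → EuclideanSpace ℝ (Fin d))
    (hdisj : ∀ i j, i ≠ j → 2 ≤ ‖x i - x j‖)
    (i j : Fin n) (hij : ‖x i - x j‖ = 2)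
    (v : PiLp 2 fun _ : Fin n => EuclideanSpace ℝ (Fin d)) :
    collide x i j v = fold (((2 : ℝ) ^ (-(3 : ℝ) / 2)) • ztilde x i j) 0 v :=
  collision_is_folding_general x i j hij v
end

section
/- Unbounded orbits for two half-planes: for every m ∈ ℕ there exist closed half-planes H_1, H_2 in ℝ² (with 0 ∈ ∂H_1 ∩ ∂H_2), a starting point v_1, and a sequence α_j ∈ {1,2} such that the orbit v_{j+1} = F_{H_{α_j}}(v_j) contains more than m distinct points. In particular, no bound on orbit size can depend only on the number of half-spaces. -/
open Complex ComplexConjugate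

section General

variable {E : Type*} [NormedAddCommGroup E] [InnerProductSpace ℝ E]

theorem fold_map_linearIsometryEquiv {F : Type*} [NormedAddCommGroup F] [InnerProductSpace ℝ F]
    (L : E ≃ₗᵢ[ℝ] F) (n p v : E) : fold (L n) (L p) (L v) = L (fold n p v) := by
  simp only [fold, ← map_sub, LinearIsometryEquiv.inner_map_map]
  split_ifs <;> simp

noncomputable def foldOrbit (n : ℕ → E) (v₀ : E) : ℕ → E
  | 0 => v₀
  | j + 1 => fold (n j) 0 (foldOrbit n v₀ j)

end General

theorem Complex.fold_zero_eq_of_re_neg {n z : ℂ} (hn : ‖n‖ = 1) (h : (n * conj z).re < 0) :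
    fold n 0 z = -(n ^ 2 * conj z) := by
  have hn' : n.re * n.re + n.im * n.im = 1 := by
    rw [← normSq_apply, normSq_eq_norm_sq, hn, one_pow]
  rw [fold, sub_zero, Complex.inner, if_neg h.not_ge]
  apply Complex.ext <;> simp [sq]
  · linear_combination (-z.re) * hn'
  · linear_combination (-z.im) * hn'

theorem fold_neg_I_exp_mul_I {θ : ℝ} (h : 0 < Real.sin θ) :
    fold (-I) 0 (exp (θ * I)) = exp (-θ * I) := by
  have hconj : conj (exp (θ * I)) = exp (-θ * I) := by rw [← exp_conj]; simp
  rw [Complex.fold_zero_eq_of_re_neg (by simp), hconj]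
  · simp
  · rw [hconj, ← ofReal_neg, neg_mul, neg_re, I_mul_re, neg_neg, exp_ofReal_mul_I_im,
      Real.sin_neg]
    linarith

theorem fold_I_mul_exp_mul_I {ε θ : ℝ} (h : 0 < Real.sin (θ + ε)) :
    fold (I * exp (ε * I)) 0 (exp (-θ * I)) = exp ((θ + 2 * ε) * I) := by
  have hconj : conj (exp (-θ * I)) = exp (θ * I) := by rw [← exp_conj]; simp
  rw [Complex.fold_zero_eq_of_re_neg (by simp), hconj]
  · rw [mul_pow, I_sq, ← exp_nat_mul, neg_one_mul, neg_mul, neg_neg, ← exp_add]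
    congr 1
    push_cast
    ring
  · rw [hconj, mul_assoc, ← exp_add, ← add_mul, ← ofReal_add, I_mul_re, exp_ofReal_mul_I_im,
      add_comm]
    linarith

/-- The half-planes are `{Im z ≤ 0}` and `{Im (exp (-εi) z) ≥ 0}`, bounded by lines at angle `ε`. -/
noncomputable def twoLineNormal (ε : ℝ) : Fin 2 → ℂ := ![-I, I * exp (ε * I)]

def alternatingIndex (j : ℕ) : Fin 2 := if Even j then 0 else 1

theorem foldOrbit_twoLineNormal_two_mul {ε : ℝ} (hε : 0 < ε) {k : ℕ}
    (hk : 2 * k * ε < Real.pi) :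
    foldOrbit (twoLineNormal ε ∘ alternatingIndex) (exp (ε * I)) (2 * k) =
      exp (((2 * k + 1) * ε : ℝ) * I) := by
  induction k with
  | zero => simp [foldOrbit]
  | succ k ih =>
    push_cast at hk
    have hsin_odd : 0 < Real.sin ((2 * k + 1) * ε) :=
      Real.sin_pos_of_pos_of_lt_pi (by positivity) (by linarith)
    have hsin_even : 0 < Real.sin ((2 * k + 1) * ε + ε) :=
      Real.sin_pos_of_pos_of_lt_pi (by positivity) (by linarith)
    have heven : Even (2 * k) := even_two_mul k
    have hodd : ¬Even (2 * k + 1) := Nat.not_even_iff_odd.mpr (odd_two_mul_add_one k)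
    rw [show 2 * (k + 1) = 2 * k + 1 + 1 by ring]
    simp only [foldOrbit, Function.comp_apply]
    rw [ih (by linarith)]
    simp only [alternatingIndex, if_pos heven, if_neg hodd, twoLineNormal, Matrix.cons_val_zero,
      Matrix.cons_val_one]
    rw [fold_neg_I_exp_mul_I hsin_odd, fold_I_mul_exp_mul_I hsin_even]
    push_cast
    ring_nf

theorem injOn_exp_odd_mul_mul_I {ε : ℝ} (hε : 0 < ε) :
    Set.InjOn (fun k : ℕ => exp (((2 * k + 1) * ε : ℝ) * I))
      {k | (2 * k + 1) * ε ≤ Real.pi} := by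
  intro a ha b hb hab
  have hmem : ∀ c : ℕ, (2 * c + 1) * ε ≤ Real.pi → (2 * c + 1) * ε ∈ Set.Icc 0 Real.pi :=
    fun c hc => ⟨by positivity, hc⟩
  have hangle := Circle.exp_injOn_Icc (by linarith [Real.pi_pos]) (hmem a ha) (hmem b hb)
    (Circle.ext (by simpa only [Circle.coe_exp] using hab))
  have hab' : (2 * a + 1 : ℝ) = 2 * b + 1 := mul_right_cancel₀ hε.ne' hangle
  exact_mod_cast (by linarith : (a : ℝ) = b)

theorem unbounded_orbits_two_halfplanes (m : ℕ) :
    ∃ (h : Fin 2 → EuclideanSpace ℝ (Fin 2)) (v1 : EuclideanSpace ℝ (Fin 2))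
      (α : ℕ → Fin 2) (v : ℕ → EuclideanSpace ℝ (Fin 2)),
      (∀ k, ‖h k‖ = 1) ∧ v 0 = v1 ∧
      (∀ j, v (j + 1) = fold (h (α j)) 0 (v j)) ∧
      ∃ S : Finset (EuclideanSpace ℝ (Fin 2)), ↑S ⊆ Set.range v ∧ m < S.card := by
  set ε := Real.pi / (2 * m + 1)
  have hε : 0 < ε := by positivity
  have hangle : ∀ k ≤ m, (2 * k + 1) * ε ≤ Real.pi := fun k hk => by
    rw [← le_div_iff₀ hε, div_div_cancel₀ Real.pi_ne_zero]
    exact_mod_cast (by omega : 2 * k + 1 ≤ 2 * m + 1)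
  let L := Complex.orthonormalBasisOneI.repr
  let z := foldOrbit (twoLineNormal ε ∘ alternatingIndex) (exp (ε * I))
  have hz : ∀ k ≤ m, z (2 * k) = exp (((2 * k + 1) * ε : ℝ) * I) := fun k hk =>
    foldOrbit_twoLineNormal_two_mul hε (by linarith [hangle k hk])
  refine ⟨L ∘ twoLineNormal ε, L (exp (ε * I)), alternatingIndex, L ∘ z, ?_, rfl,
    fun j => by simp [z, foldOrbit, ← fold_map_linearIsometryEquiv],
    (Finset.range (m + 1)).image fun k : ℕ => L (exp (((2 * k + 1) * ε : ℝ) * I)), ?_, ?_⟩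
  · intro k
    fin_cases k <;> simp [twoLineNormal]
  · intro _ hx
    obtain ⟨k, hk, rfl⟩ := Finset.mem_image.mp hx
    exact ⟨2 * k, by simp [hz k (Finset.mem_range_succ_iff.mp hk)]⟩
  · rw [Finset.card_image_of_injOn, Finset.card_range]
    · omega
    · intro a ha b hb hab
      exact injOn_exp_odd_mul_mul_I hε (hangle a (Finset.mem_range_succ_iff.mp ha))
        (hangle b (Finset.mem_range_succ_iff.mp hb)) (L.injective hab)
end
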